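/- arXiv:2201.11464 — 4 statements merged into one kernel-verified Lean document; each statement's English description precedes it below -/
import Mathlib

section
/- For every quantitative separation logic formula f in QSL(𝔄), the semantics ⟦f⟧ is a well-defined one-bounded expectation, i.e., ⟦f⟧ is a total function from states to the real interval [0,1] (in particular, all maxima and minima occurring in the semantics are taken over non-empty finite sets and hence exist). -/
namespace QSLPaper

open scoped Classical

noncomputable section

/-- Variables: a countably infinite set. -/
abbrev Var : Type := ℕ
/-- Values. -/
abbrev Val : Type := ℤ
/-- Locations: positive integers. -/
abbrev Loc : Type := ℕ+
/-- Stacks. -/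
abbrev Stack : Type := Var → Val
/-- Heaps: finite partial functions from locations to `k`-tuples of values. -/
abbrev Heap (k : ℕ) : Type := Finmap (fun _ : Loc => Fin k → Val)
/-- Program states: stack-heap pairs. -/
abbrev HState (k : ℕ) : Type := Stack × Heap k

/-- Syntax of separation logic `SL(𝔄)`; atoms are predicates, i.e. sets of states. -/
inductive SL (k : ℕ) : Type where
  | tt : SL k
  | atom (p : Set (HState k)) : SL k
  | not (φ : SL k) : SL k
  | and (φ ψ : SL k) : SL k
  | or (φ ψ : SL k) : SL k
  | ex (x : Var) (φ : SL k) : SL k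
  | all (x : Var) (φ : SL k) : SL k
  | sep (φ ψ : SL k) : SL k
  | wand (φ ψ : SL k) : SL k

/-- Standard separation-logic satisfaction relation `(s,h) ⊨ φ`. -/
def SL.sat {k : ℕ} : SL k → HState k → Prop
  | .tt, _ => True
  | .atom p, σ => σ ∈ p
  | .not φ, σ => ¬ φ.sat σ
  | .and φ ψ, σ => φ.sat σ ∧ ψ.sat σ
  | .or φ ψ, σ => φ.sat σ ∨ ψ.sat σ
  | .ex x φ, σ => ∃ v : Val, φ.sat (Function.update σ.1 x v, σ.2)
  | .all x φ, σ => ∀ v : Val, φ.sat (Function.update σ.1 x v, σ.2)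
  | .sep φ ψ, σ => ∃ h₁ h₂ : Heap k, h₁.Disjoint h₂ ∧ σ.2 = h₁ ∪ h₂ ∧
      φ.sat (σ.1, h₁) ∧ ψ.sat (σ.1, h₂)
  | .wand φ ψ, σ => ∀ h' : Heap k, σ.2.Disjoint h' → φ.sat (σ.1, h') →
      ψ.sat (σ.1, σ.2 ∪ h')

/-- A formula is pure if its satisfaction does not depend on the heap. -/
def SL.Pure {k : ℕ} (B : SL k) : Prop :=
  ∀ (s : Stack) (h h' : Heap k), B.sat (s, h) ↔ B.sat (s, h')

/-- All atoms of the formula belong to the set `𝔄` of atomic predicates. -/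
def SL.atomsIn {k : ℕ} (𝔄 : Set (Set (HState k))) : SL k → Prop
  | .tt => True
  | .atom p => p ∈ 𝔄
  | .not φ => φ.atomsIn 𝔄
  | .and φ ψ => φ.atomsIn 𝔄 ∧ ψ.atomsIn 𝔄
  | .or φ ψ => φ.atomsIn 𝔄 ∧ ψ.atomsIn 𝔄
  | .ex _ φ => φ.atomsIn 𝔄
  | .all _ φ => φ.atomsIn 𝔄
  | .sep φ ψ => φ.atomsIn 𝔄 ∧ ψ.atomsIn 𝔄
  | .wand φ ψ => φ.atomsIn 𝔄 ∧ ψ.atomsIn 𝔄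

/-- Syntax of quantitative separation logic `QSL(𝔄)`:
`f ::= [φ] | [B]·f + [¬B]·f | q·f + (1−q)·f | f·f | 1−f | max(f,f) | min(f,f) |
       Sup x: f | Inf x: f | f ⋆ f | [φ] ─⋆ f`. -/
inductive QSL (k : ℕ) : Type where
  | iver (φ : SL k) : QSL k
  | ite (B : SL k) (g u : QSL k) : QSL k
  | pch (q : ℚ) (g u : QSL k) : QSL k
  | mul (g u : QSL k) : QSL k
  | onem (g : QSL k) : QSL k
  | qmax (g u : QSL k) : QSL k
  | qmin (g u : QSL k) : QSL k
  | sup (x : Var) (g : QSL k) : QSL k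
  | inf (x : Var) (g : QSL k) : QSL k
  | sep (g u : QSL k) : QSL k
  | wand (φ : SL k) (g : QSL k) : QSL k

/-- Well-formedness: guards of conditionals are pure, and all probabilities
lie in `[0,1]`.  A term `f : QSL k` with `f.WF` (and atoms in `𝔄`)
is a `QSL(𝔄)` formula as generated by the grammar. -/
def QSL.WF {k : ℕ} : QSL k → Prop
  | .iver _ => True
  | .ite B g u => B.Pure ∧ g.WF ∧ u.WF
  | .pch q g u => 0 ≤ q ∧ q ≤ 1 ∧ g.WF ∧ u.WF
  | .mul g u => g.WF ∧ u.WF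
  | .onem g => g.WF
  | .qmax g u => g.WF ∧ u.WF
  | .qmin g u => g.WF ∧ u.WF
  | .sup _ g => g.WF
  | .inf _ g => g.WF
  | .sep g u => g.WF ∧ u.WF
  | .wand _ g => g.WF

/-- All atoms of a `QSL` formula belong to `𝔄`. -/
def QSL.atomsIn {k : ℕ} (𝔄 : Set (Set (HState k))) : QSL k → Prop
  | .iver φ => φ.atomsIn 𝔄
  | .ite B g u => B.atomsIn 𝔄 ∧ g.atomsIn 𝔄 ∧ u.atomsIn 𝔄
  | .pch _ g u => g.atomsIn 𝔄 ∧ u.atomsIn 𝔄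
  | .mul g u => g.atomsIn 𝔄 ∧ u.atomsIn 𝔄
  | .onem g => g.atomsIn 𝔄
  | .qmax g u => g.atomsIn 𝔄 ∧ u.atomsIn 𝔄
  | .qmin g u => g.atomsIn 𝔄 ∧ u.atomsIn 𝔄
  | .sup _ g => g.atomsIn 𝔄
  | .inf _ g => g.atomsIn 𝔄
  | .sep g u => g.atomsIn 𝔄 ∧ u.atomsIn 𝔄
  | .wand φ g => φ.atomsIn 𝔄 ∧ g.atomsIn 𝔄

/-- The semantics `⟦f⟧ : States → ℝ` of quantitative separation logic. -/
noncomputable def QSL.eval {k : ℕ} : QSL k → HState k → ℝ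
  | .iver φ, σ => if φ.sat σ then 1 else 0
  | .ite B g u, σ =>
      (if B.sat σ then (1 : ℝ) else 0) * g.eval σ +
      (if (SL.not B).sat σ then (1 : ℝ) else 0) * u.eval σ
  | .pch q g u, σ => (q : ℝ) * g.eval σ + (1 - (q : ℝ)) * u.eval σ
  | .mul g u, σ => g.eval σ * u.eval σ
  | .onem g, σ => 1 - g.eval σ
  | .qmax g u, σ => max (g.eval σ) (u.eval σ)
  | .qmin g u, σ => min (g.eval σ) (u.eval σ)
  | .sup x g, σ => sSup { r : ℝ | ∃ v : Val, r = g.eval (Function.update σ.1 x v, σ.2) }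
  | .inf x g, σ => sInf { r : ℝ | ∃ v : Val, r = g.eval (Function.update σ.1 x v, σ.2) }
  | .sep g u, σ => sSup { r : ℝ | ∃ h₁ h₂ : Heap k, h₁.Disjoint h₂ ∧ σ.2 = h₁ ∪ h₂ ∧
      r = g.eval (σ.1, h₁) * u.eval (σ.1, h₂) }
  | .wand φ g, σ =>
      if { r : ℝ | ∃ h' : Heap k, σ.2.Disjoint h' ∧ φ.sat (σ.1, h') ∧
            r = g.eval (σ.1, σ.2 ∪ h') } = (∅ : Set ℝ) then 1
      else sInf { r : ℝ | ∃ h' : Heap k, σ.2.Disjoint h' ∧ φ.sat (σ.1, h') ∧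
            r = g.eval (σ.1, σ.2 ∪ h') }

end

end QSLPaper

namespace QSLPaper

/-- For every `QSL(𝔄)` formula `f`, the semantics `⟦f⟧` is a
well-defined one-bounded expectation: it is a total function from states to the
real interval `[0,1]`. -/
theorem qsl_semantics_well_defined {k : ℕ} (hk : 1 ≤ k)
    (𝔄 : Set (Set (HState k))) (f : QSL k)
    (hWF : f.WF) (hA : f.atomsIn 𝔄) :
    ∀ σ : HState k, f.eval σ ∈ Set.Icc (0 : ℝ) 1 := by
  clear hA
  induction f with
  | iver φ =>
    intro σ; simp only [QSL.eval]
    split <;> simp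
  | ite B g u ihg ihu =>
    obtain ⟨_, hg, hu⟩ := hWF
    intro σ
    obtain ⟨hg0, hg1⟩ := ihg hg σ
    obtain ⟨hu0, hu1⟩ := ihu hu σ
    simp only [QSL.eval, SL.sat]
    by_cases hB : B.sat σ <;> simp [hB] <;> constructor <;> linarith
  | pch q g u ihg ihu =>
    obtain ⟨hq0, hq1, hg, hu⟩ := hWF
    intro σ
    obtain ⟨hg0, hg1⟩ := ihg hg σ
    obtain ⟨hu0, hu1⟩ := ihu hu σ
    have hq0' : (0:ℝ) ≤ q := by exact_mod_cast hq0
    have hq1' : (q:ℝ) ≤ 1 := by exact_mod_cast hq1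
    simp only [QSL.eval]
    constructor
    · nlinarith
    · nlinarith
  | mul g u ihg ihu =>
    obtain ⟨hg, hu⟩ := hWF
    intro σ
    obtain ⟨hg0, hg1⟩ := ihg hg σ
    obtain ⟨hu0, hu1⟩ := ihu hu σ
    simp only [QSL.eval]
    constructor
    · positivity
    · nlinarith
  | onem g ihg =>
    intro σ
    obtain ⟨hg0, hg1⟩ := ihg hWF σ
    simp only [QSL.eval]
    constructor <;> linarith
  | qmax g u ihg ihu =>
    obtain ⟨hg, hu⟩ := hWF
    intro σ
    obtain ⟨hg0, hg1⟩ := ihg hg σ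
    obtain ⟨hu0, hu1⟩ := ihu hu σ
    simp only [QSL.eval]
    constructor
    · exact le_max_of_le_left hg0
    · exact max_le hg1 hu1
  | qmin g u ihg ihu =>
    obtain ⟨hg, hu⟩ := hWF
    intro σ
    obtain ⟨hg0, hg1⟩ := ihg hg σ
    obtain ⟨hu0, hu1⟩ := ihu hu σ
    simp only [QSL.eval]
    constructor
    · exact le_min hg0 hu0
    · exact min_le_of_left_le hg1
  | sup x g ihg =>
    intro σ
    have ih := ihg hWF
    simp only [QSL.eval]
    set S := { r : ℝ | ∃ v : Val, r = g.eval (Function.update σ.1 x v, σ.2) }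
    have hne : S.Nonempty := ⟨_, 0, rfl⟩
    have hub : ∀ r ∈ S, r ≤ 1 := by
      rintro r ⟨v, rfl⟩; exact (ih _).2
    have hbdd : BddAbove S := ⟨1, hub⟩
    constructor
    · exact le_trans (ih (Function.update σ.1 x 0, σ.2)).1
        (le_csSup hbdd ⟨0, rfl⟩)
    · exact csSup_le hne hub
  | inf x g ihg =>
    intro σ
    have ih := ihg hWF
    simp only [QSL.eval]
    set S := { r : ℝ | ∃ v : Val, r = g.eval (Function.update σ.1 x v, σ.2) }
    have hne : S.Nonempty := ⟨_, 0, rfl⟩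
    have hlb : ∀ r ∈ S, 0 ≤ r := by
      rintro r ⟨v, rfl⟩; exact (ih _).1
    constructor
    · exact le_csInf hne hlb
    · exact le_trans (csInf_le ⟨0, hlb⟩ ⟨0, rfl⟩)
        (ih (Function.update σ.1 x 0, σ.2)).2
  | sep g u ihg ihu =>
    obtain ⟨hg, hu⟩ := hWF
    intro σ
    have ihg' := ihg hg
    have ihu' := ihu hu
    simp only [QSL.eval]
    set S := { r : ℝ | ∃ h₁ h₂ : Heap k, h₁.Disjoint h₂ ∧ σ.2 = h₁ ∪ h₂ ∧
      r = g.eval (σ.1, h₁) * u.eval (σ.1, h₂) }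
    have hmem : (g.eval (σ.1, ∅) * u.eval (σ.1, σ.2)) ∈ S := by
      refine ⟨∅, σ.2, ?_, ?_, rfl⟩
      · intro a ha _; exact absurd ha Finmap.notMem_empty
      · exact (Finmap.empty_union).symm
    have hne : S.Nonempty := ⟨_, hmem⟩
    have hub : ∀ r ∈ S, r ≤ 1 := by
      rintro r ⟨h₁, h₂, _, _, rfl⟩
      obtain ⟨a0, a1⟩ := ihg' (σ.1, h₁)
      obtain ⟨b0, b1⟩ := ihu' (σ.1, h₂)
      nlinarith
    have hbdd : BddAbove S := ⟨1, hub⟩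
    constructor
    · refine le_trans ?_ (le_csSup hbdd hmem)
      obtain ⟨a0, _⟩ := ihg' (σ.1, ∅)
      obtain ⟨b0, _⟩ := ihu' (σ.1, σ.2)
      positivity
    · exact csSup_le hne hub
  | wand φ g ihg =>
    intro σ
    have ih := ihg hWF
    simp only [QSL.eval]
    split
    · simp
    · next hne =>
      set S := { r : ℝ | ∃ h' : Heap k, σ.2.Disjoint h' ∧ φ.sat (σ.1, h') ∧
            r = g.eval (σ.1, σ.2 ∪ h') }
      have hSne : S.Nonempty := Set.nonempty_iff_ne_empty.2 hne
      have hlb : ∀ r ∈ S, 0 ≤ r := by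
        rintro r ⟨h', _, _, rfl⟩; exact (ih _).1
      obtain ⟨r, hr⟩ := hSne
      constructor
      · exact le_csInf ⟨r, hr⟩ hlb
      · refine le_trans (csInf_le ⟨0, hlb⟩ hr) ?_
        obtain ⟨h', _, _, rfl⟩ := hr
        exact (ih _).2

end QSLPaper
end

section
/- For every QSL(𝔄) formula f, the evaluation set Eval(f) is finite, and for every state (s,h), the value ⟦f⟧(s,h) belongs to Eval(f). -/
namespace QSLPaper

/-- The evaluation set `Eval(f) ⊆ [0,1]`, defined inductively on the syntax. -/
def QSL.evalSet {k : ℕ} : QSL k → Set ℝ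
  | .iver _ => {0, 1}
  | .ite _ g u => g.evalSet ∪ u.evalSet
  | .pch q g u =>
      { r : ℝ | ∃ β ∈ g.evalSet, ∃ γ ∈ u.evalSet, r = (q : ℝ) * β + (1 - (q : ℝ)) * γ }
  | .mul g u => { r : ℝ | ∃ β ∈ g.evalSet, ∃ γ ∈ u.evalSet, r = β * γ }
  | .onem g => { r : ℝ | ∃ β ∈ g.evalSet, r = 1 - β }
  | .qmax g u => g.evalSet ∪ u.evalSet
  | .qmin g u => g.evalSet ∪ u.evalSet
  | .sup _ g => g.evalSet
  | .inf _ g => g.evalSet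
  | .sep g u => { r : ℝ | ∃ β ∈ g.evalSet, ∃ γ ∈ u.evalSet, r = β * γ }
  | .wand _ g => g.evalSet

end QSLPaper

namespace QSLPaper

open scoped Classical in
lemma zero_one_mem_evalSet {k : ℕ} (f : QSL k) :
    (0 : ℝ) ∈ f.evalSet ∧ (1 : ℝ) ∈ f.evalSet := by
  induction f with
  | iver φ => simp [QSL.evalSet]
  | ite B g u ihg ihu => exact ⟨Or.inl ihg.1, Or.inl ihg.2⟩
  | pch q g u ihg ihu =>
    exact ⟨⟨0, ihg.1, 0, ihu.1, by ring⟩, ⟨1, ihg.2, 1, ihu.2, by ring⟩⟩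
  | mul g u ihg ihu =>
    exact ⟨⟨0, ihg.1, 0, ihu.1, by ring⟩, ⟨1, ihg.2, 1, ihu.2, by ring⟩⟩
  | onem g ihg => exact ⟨⟨1, ihg.2, by ring⟩, ⟨0, ihg.1, by ring⟩⟩
  | qmax g u ihg ihu => exact ⟨Or.inl ihg.1, Or.inl ihg.2⟩
  | qmin g u ihg ihu => exact ⟨Or.inl ihg.1, Or.inl ihg.2⟩
  | sup x g ihg => exact ihg
  | inf x g ihg => exact ihg
  | sep g u ihg ihu =>
    exact ⟨⟨0, ihg.1, 0, ihu.1, by ring⟩, ⟨1, ihg.2, 1, ihu.2, by ring⟩⟩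
  | wand φ g ihg => exact ihg

open scoped Classical in
lemma evalSet_finite_and_eval_mem_aux {k : ℕ} (f : QSL k) :
    f.evalSet.Finite ∧ ∀ σ : HState k, f.eval σ ∈ f.evalSet := by
  induction f with
  | iver φ =>
    refine ⟨Set.Finite.insert _ (Set.finite_singleton (1:ℝ)), fun σ => ?_⟩
    show (if φ.sat σ then (1:ℝ) else 0) ∈ _
    by_cases h : φ.sat σ
    · rw [if_pos h]; exact Or.inr rfl
    · rw [if_neg h]; exact Or.inl rfl
  | ite B g u ihg ihu =>
    refine ⟨ihg.1.union ihu.1, fun σ => ?_⟩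
    show (if B.sat σ then (1:ℝ) else 0) * g.eval σ +
      (if (SL.not B).sat σ then (1:ℝ) else 0) * u.eval σ ∈ _
    by_cases hB : B.sat σ
    · have h2 : (if (SL.not B).sat σ then (1:ℝ) else 0) = 0 :=
        if_neg (not_not_intro hB)
      rw [if_pos hB, h2, one_mul, zero_mul, add_zero]
      exact Or.inl (ihg.2 σ)
    · have h2 : (if (SL.not B).sat σ then (1:ℝ) else 0) = 1 := if_pos hB
      rw [if_neg hB, h2, zero_mul, one_mul, zero_add]
      exact Or.inr (ihu.2 σ)
  | pch q g u ihg ihu =>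
    refine ⟨?_, fun σ => ⟨g.eval σ, ihg.2 σ, u.eval σ, ihu.2 σ, rfl⟩⟩
    refine (Set.Finite.image2 (fun β γ => (q:ℝ) * β + (1-(q:ℝ)) * γ) ihg.1 ihu.1).subset ?_
    rintro r ⟨β, hβ, γ, hγ, rfl⟩
    exact Set.mem_image2_of_mem hβ hγ
  | mul g u ihg ihu =>
    refine ⟨?_, fun σ => ⟨g.eval σ, ihg.2 σ, u.eval σ, ihu.2 σ, rfl⟩⟩
    refine (Set.Finite.image2 (fun β γ : ℝ => β * γ) ihg.1 ihu.1).subset ?_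
    rintro r ⟨β, hβ, γ, hγ, rfl⟩
    exact Set.mem_image2_of_mem hβ hγ
  | onem g ihg =>
    refine ⟨?_, fun σ => ⟨g.eval σ, ihg.2 σ, rfl⟩⟩
    refine (ihg.1.image (fun β : ℝ => 1 - β)).subset ?_
    rintro r ⟨β, hβ, rfl⟩
    exact ⟨β, hβ, rfl⟩
  | qmax g u ihg ihu =>
    refine ⟨ihg.1.union ihu.1, fun σ => ?_⟩
    show max (g.eval σ) (u.eval σ) ∈ _
    rcases max_choice (g.eval σ) (u.eval σ) with h | h <;> rw [h]
    · exact Or.inl (ihg.2 σ)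
    · exact Or.inr (ihu.2 σ)
  | qmin g u ihg ihu =>
    refine ⟨ihg.1.union ihu.1, fun σ => ?_⟩
    show min (g.eval σ) (u.eval σ) ∈ _
    rcases min_choice (g.eval σ) (u.eval σ) with h | h <;> rw [h]
    · exact Or.inl (ihg.2 σ)
    · exact Or.inr (ihu.2 σ)
  | sup x g ihg =>
    refine ⟨ihg.1, fun σ => ?_⟩
    show sSup {r : ℝ | ∃ v : Val, r = g.eval (Function.update σ.1 x v, σ.2)} ∈ _
    have hsub : {r : ℝ | ∃ v : Val, r = g.eval (Function.update σ.1 x v, σ.2)} ⊆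
        g.evalSet := by rintro r ⟨v, rfl⟩; exact ihg.2 _
    have hne : {r : ℝ | ∃ v : Val, r = g.eval (Function.update σ.1 x v, σ.2)}.Nonempty :=
      ⟨_, ⟨0, rfl⟩⟩
    exact hsub (hne.csSup_mem (ihg.1.subset hsub))
  | inf x g ihg =>
    refine ⟨ihg.1, fun σ => ?_⟩
    show sInf {r : ℝ | ∃ v : Val, r = g.eval (Function.update σ.1 x v, σ.2)} ∈ _
    have hsub : {r : ℝ | ∃ v : Val, r = g.eval (Function.update σ.1 x v, σ.2)} ⊆
        g.evalSet := by rintro r ⟨v, rfl⟩; exact ihg.2 _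
    have hne : {r : ℝ | ∃ v : Val, r = g.eval (Function.update σ.1 x v, σ.2)}.Nonempty :=
      ⟨_, ⟨0, rfl⟩⟩
    exact hsub (hne.csInf_mem (ihg.1.subset hsub))
  | sep g u ihg ihu =>
    have hfin : (QSL.sep g u).evalSet.Finite := by
      refine (Set.Finite.image2 (fun β γ : ℝ => β * γ) ihg.1 ihu.1).subset ?_
      rintro r ⟨β, hβ, γ, hγ, rfl⟩
      exact Set.mem_image2_of_mem hβ hγ
    refine ⟨hfin, fun σ => ?_⟩
    set S := {r : ℝ | ∃ h₁ h₂ : Heap k, h₁.Disjoint h₂ ∧ σ.2 = h₁ ∪ h₂ ∧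
      r = g.eval (σ.1, h₁) * u.eval (σ.1, h₂)} with hS
    show sSup S ∈ _
    have hsub : S ⊆ (QSL.sep g u).evalSet := by
      rintro r ⟨h₁, h₂, _, _, rfl⟩
      exact ⟨g.eval (σ.1, h₁), ihg.2 _, u.eval (σ.1, h₂), ihu.2 _, rfl⟩
    have hne : S.Nonempty :=
      ⟨_, ⟨∅, σ.2, Finmap.disjoint_empty σ.2, Finmap.empty_union.symm, rfl⟩⟩
    exact hsub (hne.csSup_mem (hfin.subset hsub))
  | wand φ g ihg =>
    refine ⟨ihg.1, fun σ => ?_⟩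
    set S := {r : ℝ | ∃ h' : Heap k, σ.2.Disjoint h' ∧ φ.sat (σ.1, h') ∧
      r = g.eval (σ.1, σ.2 ∪ h')} with hS
    show (if S = (∅ : Set ℝ) then 1 else sInf S) ∈ _
    split
    · exact (zero_one_mem_evalSet g).2
    · next h =>
      have hne : S.Nonempty := Set.nonempty_iff_ne_empty.mpr h
      have hsub : S ⊆ g.evalSet := by
        rintro r ⟨h', _, _, rfl⟩; exact ihg.2 _
      exact hsub (hne.csInf_mem (ihg.1.subset hsub))

/-- For every `QSL(𝔄)` formula `f`, the evaluation set
`Eval(f)` is finite, and for every state `(s,h)` the value `⟦f⟧(s,h)` belongs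
to `Eval(f)`. -/
theorem evalSet_finite_and_eval_mem {k : ℕ} (hk : 1 ≤ k)
    (𝔄 : Set (Set (HState k))) (f : QSL k)
    (hWF : f.WF) (hA : f.atomsIn 𝔄) :
    f.evalSet.Finite ∧ ∀ σ : HState k, f.eval σ ∈ f.evalSet := by
  exact evalSet_finite_and_eval_mem_aux f

end QSLPaper
end

section
/- For every QSL(𝔄) formula f, the cardinality of the evaluation set Eval(f) is at most 2^(π(f)+1), where π(f) is the probabilistic size of f. -/
namespace QSLPaper

/-- Size of an `SL` formula (atoms have fixed atomic size 1). -/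
def SL.size {k : ℕ} : SL k → ℕ
  | .tt => 1
  | .atom _ => 1
  | .not φ => 1 + φ.size
  | .and φ ψ => 1 + φ.size + ψ.size
  | .or φ ψ => 1 + φ.size + ψ.size
  | .ex _ φ => 1 + φ.size
  | .all _ φ => 1 + φ.size
  | .sep φ ψ => 1 + φ.size + ψ.size
  | .wand φ ψ => 1 + φ.size + ψ.size

/-- Size `|f|` of a `QSL` formula. -/
def QSL.size {k : ℕ} : QSL k → ℕ
  | .iver φ => φ.size
  | .ite B g u => 1 + B.size + g.size + (1 + B.size) + u.size
  | .pch _ g u => 1 + g.size + u.size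
  | .mul g u => 1 + g.size + u.size
  | .onem g => 1 + g.size
  | .qmax g u => 1 + g.size + u.size
  | .qmin g u => 1 + g.size + u.size
  | .sup _ g => 1 + g.size
  | .inf _ g => 1 + g.size
  | .sep g u => 1 + g.size + u.size
  | .wand φ g => 1 + g.size + φ.size

/-- Probabilistic size `π(f)` of a `QSL` formula. -/
def QSL.psize {k : ℕ} : QSL k → ℕ
  | .iver _ => 0
  | .ite _ g u => g.psize + u.psize
  | .pch _ g u => 1 + g.psize + u.psize
  | .mul g u => 1 + g.psize + u.psize
  | .onem g => g.psize
  | .qmax g u => g.psize + u.psize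
  | .qmin g u => g.psize + u.psize
  | .sup _ g => g.psize
  | .inf _ g => g.psize
  | .sep g u => 1 + g.psize + u.psize
  | .wand _ g => g.psize

/-- The evaluation set `Eval(f)` as a finite set of rationals. -/
def QSL.evalF {k : ℕ} : QSL k → Finset ℚ
  | .iver _ => {0, 1}
  | .ite _ g u => g.evalF ∪ u.evalF
  | .pch q g u => Finset.image₂ (fun β γ => q * β + (1 - q) * γ) g.evalF u.evalF
  | .mul g u => Finset.image₂ (fun β γ => β * γ) g.evalF u.evalF
  | .onem g => g.evalF.image (fun β => 1 - β)
  | .qmax g u => g.evalF ∪ u.evalF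
  | .qmin g u => g.evalF ∪ u.evalF
  | .sup _ g => g.evalF
  | .inf _ g => g.evalF
  | .sep g u => Finset.image₂ (fun β γ => β * γ) g.evalF u.evalF
  | .wand _ g => g.evalF

/-- A nonempty disjunction `φ ∨ ψ₁ ∨ … ∨ ψₙ`. -/
def SL.orChain {k : ℕ} : SL k → List (SL k) → SL k
  | φ, [] => φ
  | φ, ψ :: l => .or φ (SL.orChain ψ l)

/-- Disjunction of a list of formulae (`false`, i.e. `¬true`, for the empty list;
in all uses below the list is provably nonempty). -/
def SL.orList {k : ℕ} : List (SL k) → SL k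
  | [] => .not .tt
  | φ :: l => SL.orChain φ l

/-- The construction `⌈f⌉_α` of an `SL(𝔄)` formula characterizing `α ≤ ⟦f⟧`. -/
noncomputable def QSL.atLeast {k : ℕ} : QSL k → ℚ → SL k
  | .iver φ, α => if α ≤ 0 then .tt else φ
  | .ite B g u, α => .or (.and B (g.atLeast α)) (.and (.not B) (u.atLeast α))
  | .pch q g u, α =>
      SL.orList ((((g.evalF ×ˢ u.evalF).filter
          (fun p => α ≤ q * p.1 + (1 - q) * p.2)).toList).map
        (fun p => .and (g.atLeast p.1) (u.atLeast p.2)))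
  | .mul g u, α =>
      SL.orList ((((g.evalF ×ˢ u.evalF).filter (fun p => α ≤ p.1 * p.2)).toList).map
        (fun p => .and (g.atLeast p.1) (u.atLeast p.2)))
  | .onem g, α =>
      if α ≤ 0 then .tt
      else .not (g.atLeast (((g.evalF.filter (fun β => 1 - α < β)).min).untopD 1))
  | .qmax g u, α => .or (g.atLeast α) (u.atLeast α)
  | .qmin g u, α => .and (g.atLeast α) (u.atLeast α)
  | .sup x g, α => .ex x (g.atLeast α)
  | .inf x g, α => .all x (g.atLeast α)
  | .sep g u, α =>
      SL.orList ((((g.evalF ×ˢ u.evalF).filter (fun p => α ≤ p.1 * p.2)).toList).map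
        (fun p => .sep (g.atLeast p.1) (u.atLeast p.2)))
  | .wand φ g, α => .wand φ (g.atLeast α)

end QSLPaper

/-! Every evaluation set is finite and contains both `0` and `1` (`1 - ·` swaps them). Products
and convex combinations at most multiply cardinalities: `2^(a+1) · 2^(b+1) = 2^((1+a+b)+1)`.
For the union-like constructors the shared `0` and `1` give
`|A ∪ B| ≤ 2^(a+1) + 2^(b+1) - 2 ≤ 2^(a+b+1)`, since `(2^a - 1)(2^b - 1) ≥ 0`. -/

theorem Nat.two_pow_add_two_pow_le (a b : ℕ) : 2 ^ a + 2 ^ b ≤ 2 ^ (a + b) + 1 := by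
  have ha : 1 ≤ 2 ^ a := Nat.one_le_two_pow
  have hb : 1 ≤ 2 ^ b := Nat.one_le_two_pow
  rw [pow_add]
  nlinarith

theorem Set.ncard_image2_le {α β γ : Type*} (f : α → β → γ) {s : Set α} {t : Set β}
    (hs : s.Finite) (ht : t.Finite) : (Set.image2 f s t).ncard ≤ s.ncard * t.ncard := by
  rw [← Set.image_prod, ← Set.ncard_prod]
  exact Set.ncard_image_le (hs.prod ht)

theorem Set.ncard_union_add_two_le {α : Type*} {s t : Set α} (hs : s.Finite) (ht : t.Finite)
    {x y : α} (hxy : x ≠ y) (hx : x ∈ s ∩ t) (hy : y ∈ s ∩ t) :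
    (s ∪ t).ncard + 2 ≤ s.ncard + t.ncard := by
  rw [← Set.ncard_union_add_ncard_inter s t hs ht, ← Set.ncard_pair hxy]
  gcongr
  · exact hs.inter_of_left t
  · exact Set.insert_subset hx (Set.singleton_subset_iff.mpr hy)

theorem Set.ncard_union_le_two_pow {α : Type*} {s t : Set α} (hs : s.Finite) (ht : t.Finite)
    {x y : α} (hxy : x ≠ y) (hx : x ∈ s ∩ t) (hy : y ∈ s ∩ t) {a b : ℕ}
    (hsa : s.ncard ≤ 2 ^ (a + 1)) (htb : t.ncard ≤ 2 ^ (b + 1)) :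
    (s ∪ t).ncard ≤ 2 ^ (a + b + 1) := by
  have hunion := Set.ncard_union_add_two_le hs ht hxy hx hy
  have hpow := Nat.two_pow_add_two_pow_le a b
  rw [pow_succ] at hsa htb ⊢
  omega

theorem Set.ncard_image2_le_two_pow {α β γ : Type*} (f : α → β → γ) {s : Set α} {t : Set β}
    (hs : s.Finite) (ht : t.Finite) {a b : ℕ}
    (hsa : s.ncard ≤ 2 ^ (a + 1)) (htb : t.ncard ≤ 2 ^ (b + 1)) :
    (Set.image2 f s t).ncard ≤ 2 ^ (1 + a + b + 1) :=
  calc (Set.image2 f s t).ncard ≤ s.ncard * t.ncard := Set.ncard_image2_le f hs ht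
    _ ≤ 2 ^ (a + 1) * 2 ^ (b + 1) := Nat.mul_le_mul hsa htb
    _ = 2 ^ (1 + a + b + 1) := by rw [← pow_add]; ring_nf

theorem setOf_exists_mem_exists_mem_eq_image2 {α β γ : Type*} (f : α → β → γ)
    (s : Set α) (t : Set β) :
    {r | ∃ a ∈ s, ∃ b ∈ t, r = f a b} = Set.image2 f s t := by
  ext r
  simp only [Set.mem_ofPred_eq, Set.mem_image2, eq_comm]

namespace QSLPaper.QSL

variable {k : ℕ}

theorem evalSet_pch (q : ℚ) (g u : QSL k) :
    (pch q g u).evalSet =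
      Set.image2 (fun β γ => (q : ℝ) * β + (1 - (q : ℝ)) * γ) g.evalSet u.evalSet :=
  setOf_exists_mem_exists_mem_eq_image2 _ _ _

theorem evalSet_mul (g u : QSL k) : (mul g u).evalSet = Set.image2 (· * ·) g.evalSet u.evalSet :=
  setOf_exists_mem_exists_mem_eq_image2 _ _ _

theorem evalSet_sep (g u : QSL k) : (sep g u).evalSet = Set.image2 (· * ·) g.evalSet u.evalSet :=
  setOf_exists_mem_exists_mem_eq_image2 _ _ _

theorem evalSet_onem (g : QSL k) : (onem g).evalSet = (1 - ·) '' g.evalSet := by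
  ext r
  simp only [evalSet, Set.mem_ofPred_eq, Set.mem_image, eq_comm]

theorem evalSet_finite (f : QSL k) : f.evalSet.Finite := by
  induction f with
  | iver => exact (Set.finite_singleton 1).insert 0
  | ite _ _ _ hg hu | qmax _ _ hg hu | qmin _ _ hg hu => exact hg.union hu
  | pch _ _ _ hg hu | mul _ _ hg hu | sep _ _ hg hu =>
    simp only [evalSet_pch, evalSet_mul, evalSet_sep]
    exact hg.image2 _ hu
  | onem _ hg => exact (evalSet_onem _).symm ▸ hg.image _
  | sup _ _ hg | inf _ _ hg | wand _ _ hg => exact hg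

theorem zero_mem_evalSet_and_one_mem_evalSet (f : QSL k) : 0 ∈ f.evalSet ∧ 1 ∈ f.evalSet := by
  induction f with
  | iver => simp [evalSet]
  | ite _ _ _ hg | qmax _ _ hg | qmin _ _ hg => exact ⟨Or.inl hg.1, Or.inl hg.2⟩
  | pch _ _ _ hg hu =>
    simp only [evalSet_pch]
    exact ⟨⟨0, hg.1, 0, hu.1, by ring⟩, ⟨1, hg.2, 1, hu.2, by ring⟩⟩
  | mul _ _ hg hu | sep _ _ hg hu =>
    simp only [evalSet_mul, evalSet_sep]
    exact ⟨⟨0, hg.1, 0, hu.1, by ring⟩, ⟨1, hg.2, 1, hu.2, by ring⟩⟩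
  | onem _ hg => exact ⟨⟨1, hg.2, by ring⟩, ⟨0, hg.1, by ring⟩⟩
  | sup _ _ hg | inf _ _ hg | wand _ _ hg => exact hg

theorem ncard_evalSet_le (f : QSL k) : f.evalSet.ncard ≤ 2 ^ (f.psize + 1) := by
  induction f with
  | iver => simp [evalSet, psize, Set.ncard_pair zero_ne_one]
  | ite _ g u hg hu | qmax g u hg hu | qmin g u hg hu =>
    obtain ⟨hg₀, hg₁⟩ := g.zero_mem_evalSet_and_one_mem_evalSet
    obtain ⟨hu₀, hu₁⟩ := u.zero_mem_evalSet_and_one_mem_evalSet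
    exact Set.ncard_union_le_two_pow g.evalSet_finite u.evalSet_finite zero_ne_one
      ⟨hg₀, hu₀⟩ ⟨hg₁, hu₁⟩ hg hu
  | pch _ g u hg hu | mul g u hg hu | sep g u hg hu =>
    simp only [evalSet_pch, evalSet_mul, evalSet_sep]
    exact Set.ncard_image2_le_two_pow _ g.evalSet_finite u.evalSet_finite hg hu
  | onem g hg => exact (evalSet_onem g).symm ▸ (Set.ncard_image_le g.evalSet_finite).trans hg
  | sup _ _ hg | inf _ _ hg | wand _ _ hg => exact hg

end QSLPaper.QSL

namespace QSLPaper

theorem evalSet_card_le_general {k : ℕ} (f : QSL k) :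
    f.evalSet.Finite ∧ f.evalSet.ncard ≤ 2 ^ (f.psize + 1) :=
  ⟨f.evalSet_finite, f.ncard_evalSet_le⟩

/-- For every `QSL(𝔄)` formula `f`, the cardinality of the
evaluation set `Eval(f)` is at most `2^(π(f)+1)`, where `π(f)` is the
probabilistic size of `f`. -/
theorem evalSet_card_le {k : ℕ} (hk : 1 ≤ k)
    (𝔄 : Set (Set (HState k))) (f : QSL k)
    (hWF : f.WF) (hA : f.atomsIn 𝔄) :
    f.evalSet.Finite ∧ f.evalSet.ncard ≤ 2 ^ (f.psize + 1) :=
  evalSet_card_le_general f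

end QSLPaper
end

section
/- Every separation-logic formula a in the fragment S₁ (generated by atoms, ∧, ∨, ∃x, separating conjunction ⋆, and magic wands of the form (x ↦ ⟨y₁,…,y_k⟩) ─⋆ (·)) is semantically equivalent to a formula of the form ∃x₁,…,xₙ: c for some n ∈ ℕ, where c belongs to S₁ and is quantifier-free, i.e., for all states (s,h): (s,h) ⊨ a iff (s,h) ⊨ ∃x₁,…,xₙ: c. -/
namespace QSLPaper

noncomputable section

/-- The points-to predicate `x ↦ ⟨y₁,…,y_k⟩`: the heap consists of exactly one
cell, at the location denoted by `x`, containing the values of `y₁,…,y_k`. -/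
def pointsToVars {k : ℕ} (x : Var) (ys : Fin k → Var) : Set (HState k) :=
  { σ | ∃ l : Loc, ((l : ℕ) : ℤ) = σ.1 x ∧
      σ.2 = Finmap.singleton l (fun i => σ.1 (ys i)) }

/-- The pure equality predicate `x = y`. -/
def eqVar {k : ℕ} (x y : Var) : Set (HState k) := { σ | σ.1 x = σ.1 y }

/-- The pure disequality predicate `x ≠ y`. -/
def neVar {k : ℕ} (x y : Var) : Set (HState k) := { σ | σ.1 x ≠ σ.1 y }

/-- The empty-heap predicate `emp`. -/
def empAtom {k : ℕ} : Set (HState k) := { σ | σ.2 = ∅ }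

/-- Symbolic-heap atomic predicates: points-to predicates, pure equalities
and disequalities of variables, and `emp`. -/
def IsSHAtom {k : ℕ} (p : Set (HState k)) : Prop :=
  (∃ x ys, p = pointsToVars x ys) ∨ (∃ x y, p = eqVar x y) ∨
  (∃ x y, p = neVar x y) ∨ p = empAtom

/-- Pure guards: equalities and disequalities of variables. -/
def IsPureGuard {k : ℕ} (p : Set (HState k)) : Prop :=
  (∃ x y, p = eqVar x y) ∨ (∃ x y, p = neVar x y)

end

end QSLPaper

namespace QSLPaper

/-- The fragment `S₁`: atoms, `∧`, `∨`, `∃`, `⋆`, and magic wands whose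
antecedent is a points-to predicate. -/
inductive InS1 {k : ℕ} : SL k → Prop where
  | atom {p : Set (HState k)} : IsSHAtom p → InS1 (.atom p)
  | and {a b : SL k} : InS1 a → InS1 b → InS1 (.and a b)
  | or {a b : SL k} : InS1 a → InS1 b → InS1 (.or a b)
  | ex {x : Var} {a : SL k} : InS1 a → InS1 (.ex x a)
  | sep {a b : SL k} : InS1 a → InS1 b → InS1 (.sep a b)
  | wand {x : Var} {ys : Fin k → Var} {a : SL k} :
      InS1 a → InS1 (.wand (.atom (pointsToVars x ys)) a)

/-- The fragment `S₂`: atoms, `∧`, `∨`, `∃` and `⋆`. -/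
inductive InS2 {k : ℕ} : SL k → Prop where
  | atom {p : Set (HState k)} : IsSHAtom p → InS2 (.atom p)
  | and {a b : SL k} : InS2 a → InS2 b → InS2 (.and a b)
  | or {a b : SL k} : InS2 a → InS2 b → InS2 (.or a b)
  | ex {x : Var} {a : SL k} : InS2 a → InS2 (.ex x a)
  | sep {a b : SL k} : InS2 a → InS2 b → InS2 (.sep a b)

/-- Quantifier-free formulae. -/
def SL.QFree {k : ℕ} : SL k → Prop
  | .tt => True
  | .atom _ => True
  | .not φ => φ.QFree
  | .and φ ψ => φ.QFree ∧ ψ.QFree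
  | .or φ ψ => φ.QFree ∧ ψ.QFree
  | .ex _ _ => False
  | .all _ _ => False
  | .sep φ ψ => φ.QFree ∧ ψ.QFree
  | .wand φ ψ => φ.QFree ∧ ψ.QFree

/-- Existential prefix `∃x₁,…,xₙ: φ`. -/
def SL.exs {k : ℕ} : List Var → SL k → SL k
  | [], φ => φ
  | x :: xs, φ => .ex x (SL.exs xs φ)

end QSLPaper


/-!
Existential quantifiers are pulled outwards one at a time. Under `∧`, `∨` and `⋆` this is the
usual prenex law, once bound variables are renamed apart from the free variables of the other
operand. Under a magic wand `(x ↦ ⟨y⟩) ─⋆ ∃z: a` it works because points-to predicates are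
precise: at a given stack at most one heap satisfies the antecedent, so the witness for `z`
chosen for that heap serves every heap the wand quantifies over (and if there is no such heap,
the wand holds vacuously for any value of `z`).
-/

namespace QSLPaper

variable {k : ℕ}

def SL.Equiv (a b : SL k) : Prop :=
  ∀ σ : HState k, a.sat σ ↔ b.sat σ

theorem SL.Equiv.trans {a b c : SL k} (hab : a.Equiv b) (hbc : b.Equiv c) : a.Equiv c :=
  fun σ => (hab σ).trans (hbc σ)

theorem SL.Equiv.ex {a b : SL k} (x : Var) (h : a.Equiv b) : (SL.ex x a).Equiv (.ex x b) :=
  fun _ => exists_congr fun _ => h _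

theorem SL.Equiv.exs {a b : SL k} (xs : List Var) (h : a.Equiv b) :
    (SL.exs xs a).Equiv (.exs xs b) := by
  induction xs with
  | nil => exact h
  | cons x xs ih => exact ih.ex x

theorem SL.exs_append (xs ys : List Var) (c : SL k) :
    SL.exs (xs ++ ys) c = .exs xs (.exs ys c) := by
  induction xs with
  | nil => rfl
  | cons x xs ih => exact congrArg (SL.ex x) ih

theorem SL.equiv_exs_of_equiv_ex {f : SL k → SL k} {xs : List Var}
    (hf : ∀ x ∈ xs, ∀ a, (f (.ex x a)).Equiv (.ex x (f a))) (c : SL k) :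
    (f (.exs xs c)).Equiv (.exs xs (f c)) := by
  induction xs with
  | nil => exact fun _ => Iff.rfl
  | cons x xs ih =>
    exact (hf x List.mem_cons_self _).trans
      ((ih fun y hy => hf y (List.mem_cons_of_mem x hy)).ex x)

def SL.DependsOn (a : SL k) (V : Finset Var) : Prop :=
  ∀ s s' : Stack, (∀ v ∈ V, s v = s' v) → ∀ h : Heap k, a.sat (s, h) ↔ a.sat (s', h)

theorem SL.DependsOn.mono {a : SL k} {V W : Finset Var} (ha : a.DependsOn V) (hVW : V ⊆ W) :
    a.DependsOn W :=
  fun s s' hss' => ha s s' fun v hv => hss' v (hVW hv)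

theorem SL.DependsOn.sat_update {a : SL k} {V : Finset Var} (ha : a.DependsOn V) {x : Var}
    (hx : x ∉ V) (s : Stack) (v : Val) (h : Heap k) :
    a.sat (Function.update s x v, h) ↔ a.sat (s, h) :=
  ha _ _ (fun _ hy => Function.update_of_ne (ne_of_mem_of_not_mem hy hx) _ _) h

theorem SL.DependsOn.ex {a : SL k} {V : Finset Var} (ha : a.DependsOn V) (x : Var) :
    (SL.ex x a).DependsOn V := by
  intro s s' hss' h
  refine exists_congr fun v => ha _ _ (fun y hy => ?_) h
  simp only [Function.update_apply, hss' y hy]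

theorem SL.DependsOn.exs {a : SL k} {V : Finset Var} (ha : a.DependsOn V) (xs : List Var) :
    (SL.exs xs a).DependsOn V := by
  induction xs with
  | nil => exact ha
  | cons x xs ih => exact ih.ex x

theorem SL.sat_wand_congr {a a' b b' : SL k} {s s' : Stack}
    (ha : ∀ h, a.sat (s, h) ↔ a'.sat (s', h)) (hb : ∀ h, b.sat (s, h) ↔ b'.sat (s', h))
    (h : Heap k) : (SL.wand a b).sat (s, h) ↔ (SL.wand a' b').sat (s', h) := by
  simp only [SL.sat, ha, hb]

theorem SL.DependsOn.wand {a b : SL k} {V : Finset Var} (ha : a.DependsOn V)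
    (hb : b.DependsOn V) : (SL.wand a b).DependsOn V :=
  fun s s' hss' => SL.sat_wand_congr (ha s s' hss') (hb s s' hss')

def SL.Precise (a : SL k) : Prop :=
  ∀ (s : Stack) (h₁ h₂ : Heap k), a.sat (s, h₁) → a.sat (s, h₂) → h₁ = h₂

theorem SL.Precise.wand_ex_equiv {P : SL k} {V : Finset Var} (hP : P.Precise)
    (hPV : P.DependsOn V) {x : Var} (hx : x ∉ V) (a : SL k) :
    (SL.wand P (.ex x a)).Equiv (.ex x (.wand P a)) := by
  rintro ⟨s, h⟩
  simp only [SL.sat, hPV.sat_update hx]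
  constructor
  · intro hw
    by_cases hP₀ : ∃ h₀, h.Disjoint h₀ ∧ P.sat (s, h₀)
    · obtain ⟨h₀, hd₀, hs₀⟩ := hP₀
      obtain ⟨v, hv⟩ := hw h₀ hd₀ hs₀
      refine ⟨v, fun h' _ hs' => ?_⟩
      rwa [hP s h' h₀ hs' hs₀]
    · exact ⟨0, fun h' hd hs' => absurd ⟨h', hd, hs'⟩ hP₀⟩
  · rintro ⟨v, hv⟩ h' hd hs'
    exact ⟨v, hv h' hd hs'⟩

structure IsPrenexConnective (op : SL k → SL k → SL k) : Prop where
  inS1 : ∀ {a b : SL k}, InS1 a → InS1 b → InS1 (op a b)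
  qFree : ∀ {a b : SL k}, a.QFree → b.QFree → (op a b).QFree
  sat_congr : ∀ {a a' b b' : SL k} {s s' : Stack}, (∀ h, a.sat (s, h) ↔ a'.sat (s', h)) →
    (∀ h, b.sat (s, h) ↔ b'.sat (s', h)) → ∀ h, (op a b).sat (s, h) ↔ (op a' b').sat (s', h)
  ex_left : ∀ {x : Var} {a b : SL k} {V : Finset Var}, b.DependsOn V → x ∉ V →
    (op (.ex x a) b).Equiv (.ex x (op a b))
  ex_right : ∀ {x : Var} {a b : SL k} {V : Finset Var}, a.DependsOn V → x ∉ V →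
    (op a (.ex x b)).Equiv (.ex x (op a b))

theorem isPrenexConnective_and : IsPrenexConnective (SL.and (k := k)) where
  inS1 := .and
  qFree := And.intro
  sat_congr ha hb h := and_congr (ha h) (hb h)
  ex_left hb hx := by
    rintro ⟨s, h⟩
    simp only [SL.sat, hb.sat_update hx, exists_and_right]
  ex_right ha hx := by
    rintro ⟨s, h⟩
    simp only [SL.sat, ha.sat_update hx, exists_and_left]

theorem isPrenexConnective_or : IsPrenexConnective (SL.or (k := k)) where
  inS1 := .or
  qFree := And.intro
  sat_congr ha hb h := or_congr (ha h) (hb h)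
  ex_left hb hx := by
    rintro ⟨s, h⟩
    simp only [SL.sat, hb.sat_update hx, exists_or, exists_const]
  ex_right ha hx := by
    rintro ⟨s, h⟩
    simp only [SL.sat, ha.sat_update hx, exists_or, exists_const]

theorem isPrenexConnective_sep : IsPrenexConnective (SL.sep (k := k)) where
  inS1 := .sep
  qFree := And.intro
  sat_congr ha hb h := by simp only [SL.sat, ha, hb]
  ex_left hb hx := by
    rintro ⟨s, h⟩
    simp only [SL.sat, hb.sat_update hx]
    constructor
    · rintro ⟨h₁, h₂, hd, rfl, ⟨v, hv⟩, hs₂⟩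
      exact ⟨v, h₁, h₂, hd, rfl, hv, hs₂⟩
    · rintro ⟨v, h₁, h₂, hd, rfl, hv, hs₂⟩
      exact ⟨h₁, h₂, hd, rfl, ⟨v, hv⟩, hs₂⟩
  ex_right ha hx := by
    rintro ⟨s, h⟩
    simp only [SL.sat, ha.sat_update hx]
    constructor
    · rintro ⟨h₁, h₂, hd, rfl, hs₁, ⟨v, hv⟩⟩
      exact ⟨v, h₁, h₂, hd, rfl, hs₁, hv⟩
    · rintro ⟨v, h₁, h₂, hd, rfl, hs₁, hv⟩
      exact ⟨h₁, h₂, hd, rfl, hs₁, ⟨v, hv⟩⟩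

namespace IsPrenexConnective

variable {op : SL k → SL k → SL k}

theorem dependsOn (hop : IsPrenexConnective op) {a b : SL k} {V : Finset Var}
    (ha : a.DependsOn V) (hb : b.DependsOn V) : (op a b).DependsOn V :=
  fun s s' hss' => hop.sat_congr (ha s s' hss') (hb s s' hss')

theorem equiv_exs_append (hop : IsPrenexConnective op) {c d : SL k} {V W : Finset Var}
    (hc : c.DependsOn V) (hd : d.DependsOn W) {xs ys : List Var} (hxs : ∀ x ∈ xs, x ∉ W)
    (hys : ∀ y ∈ ys, y ∉ V) : (op (.exs xs c) (.exs ys d)).Equiv (.exs (xs ++ ys) (op c d)) := by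
  rw [SL.exs_append]
  exact (SL.equiv_exs_of_equiv_ex (f := (op · (.exs ys d)))
    (fun x hx _ => hop.ex_left (hd.exs ys) (hxs x hx)) c).trans
    ((SL.equiv_exs_of_equiv_ex (f := op c) (fun y hy _ => hop.ex_right hc (hys y hy)) d).exs xs)

end IsPrenexConnective

def renameAtom (ρ : Var → Var) (p : Set (HState k)) : Set (HState k) :=
  (fun σ : HState k => (σ.1 ∘ ρ, σ.2)) ⁻¹' p

theorem IsSHAtom.renameAtom {p : Set (HState k)} (hp : IsSHAtom p) (ρ : Var → Var) :
    IsSHAtom (renameAtom ρ p) := by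
  rcases hp with ⟨x, ys, rfl⟩ | ⟨x, y, rfl⟩ | ⟨x, y, rfl⟩ | rfl
  · exact Or.inl ⟨ρ x, ρ ∘ ys, rfl⟩
  · exact Or.inr <| Or.inl ⟨ρ x, ρ y, rfl⟩
  · exact Or.inr <| Or.inr <| Or.inl ⟨ρ x, ρ y, rfl⟩
  · exact Or.inr <| Or.inr <| Or.inr rfl

theorem SL.DependsOn.atom_renameAtom {p : Set (HState k)} {V : Finset Var}
    (hp : (SL.atom p).DependsOn V) (ρ : Var → Var) :
    (SL.atom (renameAtom ρ p)).DependsOn (V.image ρ) :=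
  fun s s' hss' => hp (s ∘ ρ) (s' ∘ ρ) fun v hv => hss' (ρ v) (Finset.mem_image_of_mem ρ hv)

theorem dependsOn_pointsToVars (x : Var) (ys : Fin k → Var) :
    (SL.atom (pointsToVars x ys)).DependsOn (insert x (Finset.univ.image ys)) := by
  intro s s' hss' h
  have hx : s x = s' x := hss' x (Finset.mem_insert_self _ _)
  have hys : (fun i => s (ys i)) = fun i => s' (ys i) := funext fun i =>
    hss' (ys i) (Finset.mem_insert_of_mem (Finset.mem_image_of_mem ys (Finset.mem_univ i)))
  simp only [SL.sat, pointsToVars, Set.mem_ofPred_eq, hx, hys]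

theorem precise_pointsToVars (x : Var) (ys : Fin k → Var) :
    (SL.atom (pointsToVars x ys)).Precise := by
  rintro s h₁ h₂ ⟨l₁, hl₁, e₁⟩ ⟨l₂, hl₂, e₂⟩
  obtain rfl : l₁ = l₂ := by exact_mod_cast hl₁.trans hl₂.symm
  exact e₁.trans e₂.symm

theorem IsSHAtom.exists_dependsOn {p : Set (HState k)} (hp : IsSHAtom p) :
    ∃ V, (SL.atom p).DependsOn V := by
  rcases hp with ⟨x, ys, rfl⟩ | ⟨x, y, rfl⟩ | ⟨x, y, rfl⟩ | rfl
  · exact ⟨_, dependsOn_pointsToVars x ys⟩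
  · refine ⟨{x, y}, fun s s' hss' h => ?_⟩
    simp [SL.sat, eqVar, hss' x (by simp), hss' y (by simp)]
  · refine ⟨{x, y}, fun s s' hss' h => ?_⟩
    simp [SL.sat, neVar, hss' x (by simp), hss' y (by simp)]
  · exact ⟨∅, fun _ _ _ _ => Iff.rfl⟩

/-- Quantifying over all renamings `ρ` and all sets `F` of variables the prefix must avoid
is what lets the `∃` case rename its bound variable apart. -/
def SL.HasPrenexForms (a : SL k) (V : Finset Var) : Prop :=
  a.DependsOn V ∧ ∀ (ρ : Var → Var) (F : Finset Var), ∃ (xs : List Var) (c : SL k),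
    InS1 c ∧ c.QFree ∧ (∀ x ∈ xs, x ∉ F) ∧ c.DependsOn (V.image ρ ∪ xs.toFinset) ∧
      ∀ (s : Stack) (h : Heap k), (SL.exs xs c).sat (s, h) ↔ a.sat (s ∘ ρ, h)

namespace SL.HasPrenexForms

theorem atom {p : Set (HState k)} (hp : IsSHAtom p) {V : Finset Var}
    (hV : (SL.atom p).DependsOn V) : (SL.atom p).HasPrenexForms V := by
  refine ⟨hV, fun ρ F => ⟨[], .atom (renameAtom ρ p), .atom (hp.renameAtom ρ), trivial,
    nofun, ?_, fun _ _ => Iff.rfl⟩⟩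
  simpa using hV.atom_renameAtom ρ

theorem binop {op : SL k → SL k → SL k} (hop : IsPrenexConnective op) {a b : SL k}
    {V W : Finset Var} (ha : a.HasPrenexForms V) (hb : b.HasPrenexForms W) :
    (op a b).HasPrenexForms (V ∪ W) := by
  refine ⟨hop.dependsOn (ha.1.mono Finset.subset_union_left)
    (hb.1.mono Finset.subset_union_right), fun ρ F => ?_⟩
  obtain ⟨xs, c, hc, hcq, hxs, hcV, hca⟩ := ha.2 ρ (F ∪ (V ∪ W).image ρ)
  obtain ⟨ys, d, hd, hdq, hys, hdW, hdb⟩ := hb.2 ρ (F ∪ (V ∪ W).image ρ ∪ xs.toFinset)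
  have hxsW : ∀ x ∈ xs, x ∉ W.image ρ ∪ ys.toFinset := by
    simp only [Finset.mem_union, Finset.mem_image, List.mem_toFinset] at hxs hys ⊢
    grind
  have hysV : ∀ y ∈ ys, y ∉ V.image ρ ∪ xs.toFinset := by
    simp only [Finset.mem_union, Finset.mem_image, List.mem_toFinset] at hys ⊢
    grind
  refine ⟨xs ++ ys, op c d, hop.inS1 hc hd, hop.qFree hcq hdq, ?_,
    hop.dependsOn (hcV.mono ?_) (hdW.mono ?_),
    fun s h => ((hop.equiv_exs_append hcV hdW hxsW hysV) (s, h)).symm.trans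
      (hop.sat_congr (hca s) (hdb s) h)⟩
  · simp only [Finset.mem_union, List.mem_append, List.mem_toFinset] at hxs hys ⊢
    grind
  · exact Finset.union_subset_union (Finset.image_subset_image Finset.subset_union_left)
      (by simp)
  · exact Finset.union_subset_union (Finset.image_subset_image Finset.subset_union_right)
      (by simp)

theorem ex {a : SL k} {V : Finset Var} (ha : a.HasPrenexForms V) (x : Var) :
    (SL.ex x a).HasPrenexForms V := by
  refine ⟨ha.1.ex x, fun ρ F => ?_⟩
  obtain ⟨z, hz⟩ := Infinite.exists_notMem_finset (F ∪ V.image ρ)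
  obtain ⟨xs, c, hc, hcq, hxs, hcV, hca⟩ := ha.2 (Function.update ρ x z) (insert z F)
  refine ⟨z :: xs, c, hc, hcq, ?_, hcV.mono ?_, fun s h => exists_congr fun v => ?_⟩
  · rintro y (_ | ⟨_, hy⟩) hyF
    · exact hz (Finset.mem_union_left _ hyF)
    · exact hxs y hy (Finset.mem_insert_of_mem hyF)
  · simp only [Finset.subset_iff, Finset.mem_union, Finset.mem_image, List.mem_toFinset,
      List.mem_cons]
    grind
  · refine (hca _ h).trans (ha.1 _ _ (fun y hy => ?_) h)
    by_cases hyx : y = x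
    · simp [hyx]
    · have hρy : ρ y ≠ z := fun hρy =>
        hz (Finset.mem_union_right _ (hρy ▸ Finset.mem_image_of_mem ρ hy))
      simp [Function.update_of_ne hyx, hρy]

theorem wand {b : SL k} {V : Finset Var} (hb : b.HasPrenexForms V) (x : Var)
    (ys : Fin k → Var) :
    (SL.wand (.atom (pointsToVars x ys)) b).HasPrenexForms
      (insert x (Finset.univ.image ys) ∪ V) := by
  refine ⟨(dependsOn_pointsToVars x ys).mono Finset.subset_union_left |>.wand
    (hb.1.mono Finset.subset_union_right), fun ρ F => ?_⟩
  have hP := (dependsOn_pointsToVars x ys).atom_renameAtom ρ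
  obtain ⟨xs, c, hc, hcq, hxs, hcV, hcb⟩ :=
    hb.2 ρ (F ∪ (insert x (Finset.univ.image ys)).image ρ)
  refine ⟨xs, .wand (.atom (pointsToVars (ρ x) (ρ ∘ ys))) c, .wand hc, ⟨trivial, hcq⟩,
    fun y hy hyF => hxs y hy (Finset.mem_union_left _ hyF), (hP.mono ?_).wand (hcV.mono ?_),
    fun s h => ?_⟩
  · exact (Finset.image_subset_image Finset.subset_union_left).trans Finset.subset_union_left
  · exact Finset.union_subset_union
      (Finset.image_subset_image Finset.subset_union_right) subset_rfl
  · have hpull := SL.equiv_exs_of_equiv_ex (fun y hy a =>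
      (precise_pointsToVars (ρ x) (ρ ∘ ys)).wand_ex_equiv hP
        (fun hyP => hxs y hy (Finset.mem_union_right _ hyP)) a) c
    -- `pointsToVars (ρ x) (ρ ∘ ys)` is `renameAtom ρ (pointsToVars x ys)` by definition
    exact (hpull (s, h)).symm.trans
      (SL.sat_wand_congr (s := s) (s' := s ∘ ρ) (fun _ => Iff.rfl) (hcb s) h)

end SL.HasPrenexForms

theorem InS1.exists_hasPrenexForms {a : SL k} (ha : InS1 a) : ∃ V, a.HasPrenexForms V := by
  induction ha with
  | atom hp =>
    obtain ⟨V, hV⟩ := hp.exists_dependsOn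
    exact ⟨V, .atom hp hV⟩
  | and _ _ iha ihb =>
    obtain ⟨V, ha⟩ := iha
    obtain ⟨W, hb⟩ := ihb
    exact ⟨V ∪ W, .binop isPrenexConnective_and ha hb⟩
  | or _ _ iha ihb =>
    obtain ⟨V, ha⟩ := iha
    obtain ⟨W, hb⟩ := ihb
    exact ⟨V ∪ W, .binop isPrenexConnective_or ha hb⟩
  | sep _ _ iha ihb =>
    obtain ⟨V, ha⟩ := iha
    obtain ⟨W, hb⟩ := ihb
    exact ⟨V ∪ W, .binop isPrenexConnective_sep ha hb⟩
  | @ex x _ _ ih =>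
    obtain ⟨V, ha⟩ := ih
    exact ⟨V, ha.ex x⟩
  | @wand x ys _ _ ih =>
    obtain ⟨V, hb⟩ := ih
    exact ⟨_, hb.wand x ys⟩

theorem s1_prenex_general {k : ℕ} (a : SL k) (ha : InS1 a) :
    ∃ (xs : List Var) (c : SL k), InS1 c ∧ c.QFree ∧
      ∀ σ : HState k, a.sat σ ↔ (SL.exs xs c).sat σ := by
  obtain ⟨V, -, hprenex⟩ := ha.exists_hasPrenexForms
  obtain ⟨xs, c, hc, hcq, -, -, hca⟩ := hprenex id ∅
  exact ⟨xs, c, hc, hcq, fun σ => (hca σ.1 σ.2).symm⟩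

/-- Every separation-logic formula `a` in the fragment `S₁`
(atoms, `∧`, `∨`, `∃x`, `⋆`, and magic wands `(x ↦ ⟨y₁,…,y_k⟩) ─⋆ (·)`) is
semantically equivalent to a formula `∃x₁,…,xₙ: c` for some `n ∈ ℕ`, where `c`
belongs to `S₁` and is quantifier-free. -/
theorem s1_prenex {k : ℕ} (hk : 1 ≤ k) (a : SL k) (ha : InS1 a) :
    ∃ (xs : List Var) (c : SL k), InS1 c ∧ c.QFree ∧
      ∀ σ : HState k, a.sat σ ↔ (SL.exs xs c).sat σ :=
  s1_prenex_general a ha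

end QSLPaper
end
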